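/- arXiv:0901.4194 — 4 statements merged into one kernel-verified Lean document; each statement's English description precedes it below -/
import Mathlib

section
/- Let Λ : [0,∞) → [0,∞) be absolutely continuous on every compact subinterval of [0,∞), and let φ : [0,∞) → [0,∞) be locally integrable with sup_{t≥0} ∫_t^{t+1} φ(τ) dτ ≤ Q for some Q ≥ 0. Assume there exist K ≥ 0 and ε₀ > 0 such that for every ε ∈ (0, ε₀] the differential inequality Λ'(t) + ε·Λ(t) ≤ K·ε²·Λ(t)^{3/2} + ε^{−2/3}·φ(t) holds for almost every t ≥ 0. Then there exist R₁ > 0 and κ > 0 such that for every R ≥ 0, if Λ(0) ≤ R then Λ(t) ≤ R₁ for all t ≥ R^{1/κ}·(1 + κ·Q)^{−1}. -/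
open MeasureTheory Set Filter Topology

/-!
For large `B` put `ε = c / √B` with a small constant `c`. While `Λ` stays in the band `[2B, 8B]`
the superlinear term is absorbed, `K ε² Λ^{3/2} ≤ ε Λ / 2`, and the forcing is negligible because
`ε^{-2/3} Q ≪ ε B`; so `Λ` decreases at rate `ε B` up to an error `ε B / 8`. Hence `Λ` cannot climb
from `2B` to `4B`, and from below `4B` it drops below `2B` within time
`4 / ε = O(√B) ≤ B / (2 (1 + Q))`. Halving the level repeatedly brings `Λ` from `R` down to a fixed
level within time `R / (1 + Q)`, which is the claim with `κ = 1`.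
-/

theorem integral_le_mul_length_add_one {φ : ℝ → ℝ} {Q : ℝ} (hQ : 0 ≤ Q)
    (hφnn : ∀ t, 0 ≤ t → 0 ≤ φ t)
    (hφint : ∀ s t : ℝ, 0 ≤ s → s ≤ t → IntervalIntegrable φ volume s t)
    (hφQ : ∀ t : ℝ, 0 ≤ t → (∫ τ in t..(t + 1), φ τ) ≤ Q)
    {u v : ℝ} (hu : 0 ≤ u) (huv : u ≤ v) :
    ∫ τ in u..v, φ τ ≤ Q * (v - u + 1) := by
  set n := ⌈v - u⌉₊
  have hvn : v ≤ u + n := by linarith [Nat.le_ceil (v - u)]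
  have hn : (n : ℝ) ≤ v - u + 1 := (Nat.ceil_lt_add_one (by linarith)).le
  calc ∫ τ in u..v, φ τ ≤ ∫ τ in u..u + n, φ τ :=
        intervalIntegral.integral_mono_interval le_rfl huv hvn
          (ae_restrict_of_forall_mem measurableSet_Ioc fun τ hτ => hφnn τ (hu.trans hτ.1.le))
          (hφint _ _ hu (by linarith))
    _ = ∑ k ∈ Finset.range n, ∫ τ in u + k..u + (k + 1 : ℕ), φ τ := by
        rw [intervalIntegral.sum_integral_adjacent_intervals fun k _ =>
          hφint _ _ (by positivity) (by push_cast; linarith)]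
        simp
    _ ≤ ∑ _k ∈ Finset.range n, Q := Finset.sum_le_sum fun k _ => by
        rw [Nat.cast_succ, ← add_assoc]; exact hφQ _ (by positivity)
    _ ≤ Q * (v - u + 1) := by
        rw [Finset.sum_const, Finset.card_range, nsmul_eq_mul, mul_comm]; gcongr

theorem continuousOn_Icc_zero_of_sub_eq_integral {Λ Λ' : ℝ → ℝ}
    (hΛ'int : ∀ s t : ℝ, 0 ≤ s → s ≤ t → IntervalIntegrable Λ' volume s t)
    (hFTC : ∀ s t : ℝ, 0 ≤ s → s ≤ t → Λ t - Λ s = ∫ τ in s..t, Λ' τ)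
    {b : ℝ} (hb : 0 ≤ b) : ContinuousOn Λ (Icc 0 b) := by
  have hprim : ContinuousOn (fun t => Λ 0 + ∫ τ in (0 : ℝ)..t, Λ' τ) (Icc 0 b) := by
    have := intervalIntegral.continuousOn_primitive_interval' (hΛ'int 0 b le_rfl hb)
      (left_mem_uIcc (a := 0) (b := b))
    rw [uIcc_of_le hb] at this
    exact continuousOn_const.add this
  exact hprim.congr fun t ht => by linarith [hFTC 0 t le_rfl ht.1]

theorem exists_crossing_of_continuousOn {f : ℝ → ℝ} {s t A B : ℝ} (hst : s ≤ t)
    (hf : ContinuousOn f (Icc s t)) (hs : f s ≤ A) (ht : B ≤ f t) :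
    ∃ u v, s ≤ u ∧ u ≤ v ∧ v ≤ t ∧ f u ≤ A ∧ B ≤ f v ∧ ∀ τ ∈ Ioo u v, A < f τ ∧ f τ < B := by
  set S := Icc s t ∩ f ⁻¹' Ici B
  have hSbdd : BddBelow S := bddBelow_Icc.mono inter_subset_left
  obtain ⟨⟨hsv, hvt⟩, hv⟩ : sInf S ∈ S :=
    (hf.preimage_isClosed_of_isClosed isClosed_Icc isClosed_Ici).csInf_mem
      ⟨t, ⟨hst, le_rfl⟩, ht⟩ hSbdd
  set T := Icc s (sInf S) ∩ f ⁻¹' Iic A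
  have hTbdd : BddAbove T := bddAbove_Icc.mono inter_subset_left
  obtain ⟨⟨hsu, huv⟩, hu⟩ : sSup T ∈ T :=
    ((hf.mono (Icc_subset_Icc le_rfl hvt)).preimage_isClosed_of_isClosed isClosed_Icc
      isClosed_Iic).csSup_mem ⟨s, ⟨le_rfl, hsv⟩, hs⟩ hTbdd
  refine ⟨sSup T, sInf S, hsu, huv, hvt, hu, hv, fun τ hτ => ⟨?_, ?_⟩⟩
  · by_contra! h
    exact (le_csSup hTbdd ⟨⟨hsu.trans hτ.1.le, hτ.2.le⟩, h⟩).not_gt hτ.1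
  · by_contra! h
    exact (csInf_le hSbdd ⟨⟨hsu.trans hτ.1.le, hτ.2.le.trans hvt⟩, h⟩).not_gt hτ.2

theorem mul_sq_mul_rpow_three_halves_le {K ε x M : ℝ} (hK : 0 ≤ K) (hε : 0 ≤ ε) (hx : 0 ≤ x)
    (hxM : x ≤ M) (habs : K * ε * √M ≤ 1 / 2) :
    K * ε ^ 2 * x ^ ((3 : ℝ) / 2) ≤ ε / 2 * x := by
  have h32 : x ^ ((3 : ℝ) / 2) = √x * x := by
    rw [Real.sqrt_eq_rpow, ← Real.rpow_add_one' hx (by norm_num)]; norm_num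
  calc K * ε ^ 2 * x ^ ((3 : ℝ) / 2) = K * ε * √x * (ε * x) := by rw [h32]; ring
    _ ≤ 1 / 2 * (ε * x) := by
        gcongr
        exact (by gcongr : K * ε * √x ≤ K * ε * √M).trans habs
    _ = ε / 2 * x := by ring

section

variable {Λ Λ' φ : ℝ → ℝ} {Q K ε B : ℝ}

theorem sub_le_of_band {m M u v : ℝ}
    (hΛ'int : IntervalIntegrable Λ' volume u v) (hFTC : Λ v - Λ u = ∫ τ in u..v, Λ' τ)
    (hφint : IntervalIntegrable φ volume u v)
    (hdiff : ∀ᵐ t ∂volume, 0 ≤ t →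
      Λ' t + ε * Λ t ≤ K * ε ^ 2 * Λ t ^ ((3 : ℝ) / 2) + ε ^ (-(2 : ℝ) / 3) * φ t)
    (hK : 0 ≤ K) (hε : 0 ≤ ε) (hm : 0 ≤ m) (habs : K * ε * √M ≤ 1 / 2)
    (hu : 0 ≤ u) (huv : u ≤ v) (hband : ∀ τ ∈ Ioo u v, m ≤ Λ τ ∧ Λ τ ≤ M) :
    Λ v - Λ u ≤ -(ε / 2 * m * (v - u)) + ε ^ (-(2 : ℝ) / 3) * ∫ τ in u..v, φ τ := by
  have hpt : ∀ᵐ τ ∂volume.restrict (Icc u v), Λ' τ ≤ -(ε / 2 * m) + ε ^ (-(2 : ℝ) / 3) * φ τ := by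
    rw [← ae_restrict_congr_set Ioo_ae_eq_Icc]
    filter_upwards [ae_restrict_of_ae hdiff, ae_restrict_mem measurableSet_Ioo] with τ hτ hmem
    obtain ⟨hmτ, hτM⟩ := hband τ hmem
    have habsτ := mul_sq_mul_rpow_three_halves_le hK hε (hm.trans hmτ) hτM habs
    nlinarith [hτ (hu.trans hmem.1.le), mul_le_mul_of_nonneg_left hmτ hε]
  rw [hFTC]
  calc ∫ τ in u..v, Λ' τ ≤ ∫ τ in u..v, (-(ε / 2 * m) + ε ^ (-(2 : ℝ) / 3) * φ τ) :=
        intervalIntegral.integral_mono_ae_restrict huv hΛ'int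
          (intervalIntegrable_const.add (hφint.const_mul _)) hpt
    _ = -(ε / 2 * m * (v - u)) + ε ^ (-(2 : ℝ) / 3) * ∫ τ in u..v, φ τ := by
        rw [intervalIntegral.integral_add intervalIntegrable_const (hφint.const_mul _),
          intervalIntegral.integral_const, intervalIntegral.integral_const_mul, smul_eq_mul]
        ring

theorem sub_le_of_two_mul_band {M u v : ℝ} (hQ : 0 ≤ Q)
    (hΛ'int : ∀ s t : ℝ, 0 ≤ s → s ≤ t → IntervalIntegrable Λ' volume s t)
    (hFTC : ∀ s t : ℝ, 0 ≤ s → s ≤ t → Λ t - Λ s = ∫ τ in s..t, Λ' τ)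
    (hφnn : ∀ t, 0 ≤ t → 0 ≤ φ t)
    (hφint : ∀ s t : ℝ, 0 ≤ s → s ≤ t → IntervalIntegrable φ volume s t)
    (hφQ : ∀ t : ℝ, 0 ≤ t → (∫ τ in t..(t + 1), φ τ) ≤ Q)
    (hdiff : ∀ᵐ t ∂volume, 0 ≤ t →
      Λ' t + ε * Λ t ≤ K * ε ^ 2 * Λ t ^ ((3 : ℝ) / 2) + ε ^ (-(2 : ℝ) / 3) * φ t)
    (hK : 0 ≤ K) (hε : 0 ≤ ε) (hB : 0 ≤ B) (habs : K * ε * √M ≤ 1 / 2)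
    (hforce : ε ^ (-(2 : ℝ) / 3) * Q ≤ ε * B / 8)
    (hu : 0 ≤ u) (huv : u ≤ v) (hband : ∀ τ ∈ Ioo u v, 2 * B ≤ Λ τ ∧ Λ τ ≤ M) :
    Λ v - Λ u ≤ -(7 / 8 * (ε * B) * (v - u)) + ε * B / 8 := by
  have hφuv := integral_le_mul_length_add_one hQ hφnn hφint hφQ hu huv
  calc Λ v - Λ u ≤ -(ε / 2 * (2 * B) * (v - u)) + ε ^ (-(2 : ℝ) / 3) * ∫ τ in u..v, φ τ :=
        sub_le_of_band (hΛ'int u v hu huv) (hFTC u v hu huv) (hφint u v hu huv) hdiff hK hε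
          (by positivity) habs hu huv hband
    _ ≤ -(ε / 2 * (2 * B) * (v - u)) + ε ^ (-(2 : ℝ) / 3) * (Q * (v - u + 1)) := by gcongr
    _ ≤ -(ε / 2 * (2 * B) * (v - u)) + ε * B / 8 * (v - u + 1) := by
        linarith [mul_le_mul_of_nonneg_right hforce (by linarith : (0 : ℝ) ≤ v - u + 1)]
    _ = -(7 / 8 * (ε * B) * (v - u)) + ε * B / 8 := by ring

theorem le_four_mul_of_le_two_mul {M : ℝ} (hQ : 0 ≤ Q)
    (hΛ'int : ∀ s t : ℝ, 0 ≤ s → s ≤ t → IntervalIntegrable Λ' volume s t)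
    (hFTC : ∀ s t : ℝ, 0 ≤ s → s ≤ t → Λ t - Λ s = ∫ τ in s..t, Λ' τ)
    (hφnn : ∀ t, 0 ≤ t → 0 ≤ φ t)
    (hφint : ∀ s t : ℝ, 0 ≤ s → s ≤ t → IntervalIntegrable φ volume s t)
    (hφQ : ∀ t : ℝ, 0 ≤ t → (∫ τ in t..(t + 1), φ τ) ≤ Q)
    (hdiff : ∀ᵐ t ∂volume, 0 ≤ t →
      Λ' t + ε * Λ t ≤ K * ε ^ 2 * Λ t ^ ((3 : ℝ) / 2) + ε ^ (-(2 : ℝ) / 3) * φ t)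
    (hK : 0 ≤ K) (hε : 0 ≤ ε) (hε1 : ε ≤ 1) (hB : 0 < B) (hM : 4 * B ≤ M)
    (habs : K * ε * √M ≤ 1 / 2) (hforce : ε ^ (-(2 : ℝ) / 3) * Q ≤ ε * B / 8)
    {s : ℝ} (hs : 0 ≤ s) (hΛs : Λ s ≤ 2 * B) {t : ℝ} (hst : s ≤ t) : Λ t ≤ 4 * B := by
  by_contra! hΛt
  obtain ⟨u, v, hsu, huv, -, hΛu, hΛv, hband⟩ := exists_crossing_of_continuousOn hst
    ((continuousOn_Icc_zero_of_sub_eq_integral hΛ'int hFTC (hs.trans hst)).mono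
      (Icc_subset_Icc hs le_rfl)) hΛs hΛt.le
  have := sub_le_of_two_mul_band hQ hΛ'int hFTC hφnn hφint hφQ hdiff hK hε hB.le habs hforce
    (hs.trans hsu) huv fun τ hτ => ⟨(hband τ hτ).1.le, (hband τ hτ).2.le.trans hM⟩
  nlinarith [mul_nonneg (mul_nonneg hε hB.le) (sub_nonneg.2 huv)]

theorem exists_le_two_mul_of_le_four_mul (hQ : 0 ≤ Q)
    (hΛ'int : ∀ s t : ℝ, 0 ≤ s → s ≤ t → IntervalIntegrable Λ' volume s t)
    (hFTC : ∀ s t : ℝ, 0 ≤ s → s ≤ t → Λ t - Λ s = ∫ τ in s..t, Λ' τ)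
    (hφnn : ∀ t, 0 ≤ t → 0 ≤ φ t)
    (hφint : ∀ s t : ℝ, 0 ≤ s → s ≤ t → IntervalIntegrable φ volume s t)
    (hφQ : ∀ t : ℝ, 0 ≤ t → (∫ τ in t..(t + 1), φ τ) ≤ Q)
    (hdiff : ∀ᵐ t ∂volume, 0 ≤ t →
      Λ' t + ε * Λ t ≤ K * ε ^ 2 * Λ t ^ ((3 : ℝ) / 2) + ε ^ (-(2 : ℝ) / 3) * φ t)
    (hK : 0 ≤ K) (hε : 0 < ε) (hε1 : ε ≤ 1) (hB : 0 < B)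
    (habs : K * ε * √(8 * B) ≤ 1 / 2) (hforce : ε ^ (-(2 : ℝ) / 3) * Q ≤ ε * B / 8)
    {s : ℝ} (hs : 0 ≤ s) (hΛs : Λ s ≤ 4 * B) : ∃ w ∈ Icc s (s + 4 / ε), Λ w ≤ 2 * B := by
  by_contra! hstay
  have hT : 0 ≤ 4 / ε := by positivity
  have hbelow : ∀ t, s ≤ t → Λ t ≤ 8 * B := fun t hst => by
    have := le_four_mul_of_le_two_mul hQ hΛ'int hFTC hφnn hφint hφQ hdiff hK hε.le hε1
      (B := 2 * B) (by positivity) (by linarith) habs (by nlinarith [mul_pos hε hB]) hs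
      (by linarith) hst
    linarith
  have := sub_le_of_two_mul_band hQ hΛ'int hFTC hφnn hφint hφQ hdiff hK hε.le hB.le habs hforce
    hs (by linarith) fun τ hτ => ⟨(hstay τ ⟨hτ.1.le, hτ.2.le⟩).le, hbelow τ hτ.1.le⟩
  have hεT : ε * (4 / ε) = 4 := by field_simp
  nlinarith [hstay (s + 4 / ε) ⟨by linarith, le_rfl⟩]

end

theorem le_eight_mul_of_escape_descent {f : ℝ → ℝ} {B₀ a : ℝ} (hB₀ : 0 < B₀) (ha : 0 ≤ a)
    (hesc : ∀ B ≥ B₀, ∀ s ≥ 0, f s ≤ 2 * B → ∀ t ≥ s, f t ≤ 4 * B)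
    (hdesc : ∀ B ≥ B₀, ∀ s ≥ 0, f s ≤ 4 * B → ∃ w ∈ Icc s (s + a * B), f w ≤ 2 * B)
    {B s t : ℝ} (hB : B₀ ≤ B) (hs : 0 ≤ s) (hfs : f s ≤ 4 * B) (ht : s + 2 * a * B ≤ t) :
    f t ≤ 8 * B₀ := by
  obtain ⟨n, hn⟩ := pow_unbounded_of_one_lt (B / (2 * B₀)) one_lt_two
  rw [div_lt_iff₀ (by positivity)] at hn
  induction n generalizing B s with
  | zero =>
    obtain ⟨w, hw, hfw⟩ := hdesc B hB s hs hfs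
    have := hesc B hB w (hs.trans hw.1) hfw t (by nlinarith [hw.2])
    linarith
  | succ n ih =>
    by_cases hBn : B < 2 ^ n * (2 * B₀)
    · exact ih hB hs hfs ht hBn
    have hB2 : B₀ ≤ B / 2 := by nlinarith [one_le_pow₀ (M₀ := ℝ) one_le_two (n := n)]
    obtain ⟨w, hw, hfw⟩ := hdesc B hB s hs hfs
    exact ih hB2 (hs.trans hw.1) (by linarith) (by nlinarith [hw.2])
      (by rw [pow_succ] at hn; linarith)

theorem eventually_exists_rate {K Q ε₀ : ℝ} (hε₀ : 0 < ε₀) :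
    ∀ᶠ B in atTop, ∃ ε ∈ Ioc 0 (min ε₀ 1), K * ε * √(8 * B) ≤ 1 / 2 ∧
      ε ^ (-(2 : ℝ) / 3) * Q ≤ ε * B / 8 ∧ 8 * (1 + Q) ≤ ε * B := by
  -- `ε = c / √B` keeps `K ε √(8B)` fixed, while `ε ^ (1/3) → 0` and `ε B = c² / ε → ∞`.
  obtain ⟨c, ⟨hc_le, hKc⟩, hc⟩ : ∃ c, (c ≤ min ε₀ 1 ∧ K * c * √8 ≤ 1 / 2) ∧ 0 < c := by
    have hKc : Tendsto (fun c => K * c * √8) (𝓝 0) (𝓝 0) :=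
      Continuous.tendsto' (by fun_prop) 0 0 (by simp)
    exact (((eventually_le_nhds (lt_min hε₀ one_pos)).and
      (hKc.eventually (eventually_le_nhds one_half_pos))).filter_mono nhdsWithin_le_nhds
      |>.and self_mem_nhdsWithin).exists (f := 𝓝[>] (0 : ℝ))
  have hsmall : ∀ᶠ ε in 𝓝[>] (0 : ℝ),
      ε ≤ c ∧ 8 * Q * ε ^ ((1 : ℝ) / 3) ≤ c ^ 2 ∧ 8 * (1 + Q) * ε ≤ c ^ 2 := by
    have h1 : Tendsto (fun ε : ℝ => 8 * Q * ε ^ ((1 : ℝ) / 3)) (𝓝 0) (𝓝 0) := by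
      simpa using ((Real.continuousAt_rpow_const 0 ((1 : ℝ) / 3) (by norm_num)).tendsto.const_mul
        (8 * Q))
    have h2 : Tendsto (fun ε : ℝ => 8 * (1 + Q) * ε) (𝓝 0) (𝓝 0) :=
      Continuous.tendsto' (by fun_prop) 0 0 (by simp)
    exact ((eventually_le_nhds hc).and ((h1.eventually (eventually_le_nhds (by positivity))).and
      (h2.eventually (eventually_le_nhds (by positivity))))).filter_mono nhdsWithin_le_nhds
  have hrate : Tendsto (fun B => c / √B) atTop (𝓝[>] 0) :=
    tendsto_nhdsWithin_iff.2 ⟨tendsto_const_nhds.div_atTop Real.tendsto_sqrt_atTop,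
      (eventually_gt_atTop 0).mono fun B hB => mem_Ioi.2 (by positivity)⟩
  filter_upwards [hrate.eventually hsmall, eventually_gt_atTop 0] with B ⟨hεc, hQε, h1Qε⟩ hB
  set ε := c / √B
  have hε : 0 < ε := by positivity
  have hεB : ε * √B = c := div_mul_cancel₀ c (Real.sqrt_pos.2 hB).ne'
  have hc2 : ε * (ε * B) = c ^ 2 := by rw [← hεB, mul_pow, Real.sq_sqrt hB.le]; ring
  refine ⟨ε, ⟨hε, hεc.trans hc_le⟩, ?_, ?_, ?_⟩
  · rwa [Real.sqrt_mul (by norm_num), show K * ε * (√8 * √B) = K * (ε * √B) * √8 by ring, hεB]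
  · have hsplit : ε ^ (-(2 : ℝ) / 3) = ε ^ ((1 : ℝ) / 3) / ε := by
      rw [← Real.rpow_sub_one hε.ne']; norm_num
    rw [hsplit, div_mul_eq_mul_div, div_le_iff₀ hε]
    nlinarith
  · nlinarith

theorem stmt_0_general
    (Λ Λ' φ : ℝ → ℝ)
    (hφnn : ∀ t, 0 ≤ t → 0 ≤ φ t)
    (hΛ'int : ∀ s t : ℝ, 0 ≤ s → s ≤ t → IntervalIntegrable Λ' volume s t)
    (hFTC : ∀ s t : ℝ, 0 ≤ s → s ≤ t → Λ t - Λ s = ∫ τ in s..t, Λ' τ)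
    (hφint : ∀ s t : ℝ, 0 ≤ s → s ≤ t → IntervalIntegrable φ volume s t)
    (Q : ℝ) (hQ : 0 ≤ Q)
    (hφQ : ∀ t : ℝ, 0 ≤ t → (∫ τ in t..(t + 1), φ τ) ≤ Q)
    (K ε₀ : ℝ) (hK : 0 ≤ K) (hε₀ : 0 < ε₀)
    (hineq : ∀ ε : ℝ, ε ∈ Set.Ioc 0 ε₀ →
      ∀ᵐ t ∂volume, 0 ≤ t →
        Λ' t + ε * Λ t ≤ K * ε ^ 2 * (Λ t) ^ ((3 : ℝ) / 2) + ε ^ (-(2 : ℝ) / 3) * φ t) :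
    ∃ R₁ > (0 : ℝ), ∃ κ > (0 : ℝ), ∀ R : ℝ, 0 ≤ R → Λ 0 ≤ R →
      ∀ t : ℝ, R ^ ((1 : ℝ) / κ) * (1 + κ * Q)⁻¹ ≤ t → Λ t ≤ R₁ := by
  obtain ⟨B₀, hB₀⟩ := ((eventually_gt_atTop 0).and
    (eventually_exists_rate (K := K) (Q := Q) hε₀)).exists_forall_of_atTop
  have hB₀pos : 0 < B₀ := (hB₀ B₀ le_rfl).1
  have hesc : ∀ B ≥ B₀, ∀ s ≥ 0, Λ s ≤ 2 * B → ∀ t ≥ s, Λ t ≤ 4 * B := by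
    intro B hB s hs hΛs t hst
    obtain ⟨hBpos, ε, ⟨hε, hε1⟩, habs, hforce, -⟩ := hB₀ B hB
    exact le_four_mul_of_le_two_mul hQ hΛ'int hFTC hφnn hφint hφQ
      (hineq ε ⟨hε, hε1.trans (min_le_left _ _)⟩) hK hε.le (hε1.trans (min_le_right _ _)) hBpos
      (by linarith) habs hforce hs hΛs hst
  have hdesc : ∀ B ≥ B₀, ∀ s ≥ 0, Λ s ≤ 4 * B →
      ∃ w ∈ Icc s (s + (2 * (1 + Q))⁻¹ * B), Λ w ≤ 2 * B := by
    intro B hB s hs hΛs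
    obtain ⟨hBpos, ε, ⟨hε, hε1⟩, habs, hforce, htime⟩ := hB₀ B hB
    obtain ⟨w, hw, hΛw⟩ := exists_le_two_mul_of_le_four_mul hQ hΛ'int hFTC hφnn hφint hφQ
      (hineq ε ⟨hε, hε1.trans (min_le_left _ _)⟩) hK hε (hε1.trans (min_le_right _ _)) hBpos
      habs hforce hs hΛs
    refine ⟨w, ⟨hw.1, hw.2.trans ?_⟩, hΛw⟩
    rw [add_le_add_iff_left, div_le_iff₀ hε, inv_mul_eq_div, div_mul_eq_mul_div,
      le_div_iff₀ (by positivity)]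
    nlinarith
  refine ⟨8 * B₀, by positivity, 1, one_pos, fun R hR hΛ0 t ht => ?_⟩
  rw [div_one, Real.rpow_one, one_mul, ← div_eq_mul_inv] at ht
  rcases le_or_gt R (4 * B₀) with hR4 | hR4
  · have ht0 : 0 ≤ t := (by positivity : 0 ≤ R / (1 + Q)).trans ht
    linarith [hesc (2 * B₀) (by linarith) 0 le_rfl (by linarith) t ht0]
  · refine le_eight_mul_of_escape_descent hB₀pos (by positivity) hesc hdesc (B := R / 4)
      (by linarith) le_rfl (by linarith) (le_trans ?_ ht)
    calc 0 + 2 * (2 * (1 + Q))⁻¹ * (R / 4) = R / (1 + Q) / 4 := by field_simp; ring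
      _ ≤ R / (1 + Q) := div_le_self (by positivity) (by norm_num)

/-- Gronwall-type lemma with parameter (Lemma 2.2 / `superl`).
`Λ` is absolutely continuous on every compact subinterval of `[0,∞)`, encoded via an
a.e. derivative `Λ'` satisfying the fundamental theorem of calculus,
`φ` is locally integrable with translation-bounded integral `≤ Q`, and for every
`ε ∈ (0, ε₀]` the differential inequality
`Λ' t + ε * Λ t ≤ K * ε^2 * (Λ t)^(3/2) + ε^(-2/3) * φ t` holds for a.e. `t ≥ 0`.
Then there are `R₁ > 0`, `κ > 0` such that `Λ(0) ≤ R` implies `Λ(t) ≤ R₁` for every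
`t ≥ R^(1/κ) * (1 + κ * Q)⁻¹`. -/
theorem stmt_0
    (Λ Λ' φ : ℝ → ℝ)
    (hΛnn : ∀ t, 0 ≤ t → 0 ≤ Λ t)
    (hφnn : ∀ t, 0 ≤ t → 0 ≤ φ t)
    (hΛ'int : ∀ s t : ℝ, 0 ≤ s → s ≤ t → IntervalIntegrable Λ' volume s t)
    (hFTC : ∀ s t : ℝ, 0 ≤ s → s ≤ t → Λ t - Λ s = ∫ τ in s..t, Λ' τ)
    (hφint : ∀ s t : ℝ, 0 ≤ s → s ≤ t → IntervalIntegrable φ volume s t)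
    (Q : ℝ) (hQ : 0 ≤ Q)
    (hφQ : ∀ t : ℝ, 0 ≤ t → (∫ τ in t..(t + 1), φ τ) ≤ Q)
    (K ε₀ : ℝ) (hK : 0 ≤ K) (hε₀ : 0 < ε₀)
    (hineq : ∀ ε : ℝ, ε ∈ Set.Ioc 0 ε₀ →
      ∀ᵐ t ∂volume, 0 ≤ t →
        Λ' t + ε * Λ t ≤ K * ε ^ 2 * (Λ t) ^ ((3 : ℝ) / 2) + ε ^ (-(2 : ℝ) / 3) * φ t) :
    ∃ R₁ > (0 : ℝ), ∃ κ > (0 : ℝ), ∀ R : ℝ, 0 ≤ R → Λ 0 ≤ R →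
      ∀ t : ℝ, R ^ ((1 : ℝ) / κ) * (1 + κ * Q)⁻¹ ≤ t → Λ t ≤ R₁ :=
  stmt_0_general Λ Λ' φ hφnn hΛ'int hFTC hφint Q hQ hφQ K ε₀ hK hε₀ hineq
end

section
/- Let Λ : [0,∞) → [0,∞) be absolutely continuous on every compact subinterval of [0,∞), let ν > 0 and K ≥ 0, and let ψ : [0,∞) → [0,∞) be locally integrable with ∫_s^t ψ(τ) dτ ≤ ν·(t − s) + K for all t > s ≥ 0. If Λ'(t) + 2ν·Λ(t) ≤ ψ(t)·Λ(t) for almost every t ≥ 0, then Λ(t) ≤ e^K · Λ(0) · e^{−ν t} for all t ≥ 0. -/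
/-!
Writing `B x = ∫_a^x β`, the differential inequality `Λ' ≤ β Λ` says that the absolutely
continuous function `Λ · exp (-B)` has a.e. nonpositive derivative, hence is nonincreasing, so
`Λ b ≤ Λ a · exp (∫_a^b β)`. For the theorem take `β = ψ - 2ν`; the translation bound on `ψ`
gives `∫_0^t β ≤ K - ν t`.
-/

open MeasureTheory Set Topology
open scoped NNReal

section AbsolutelyContinuous

variable {X Y : Type*} [PseudoMetricSpace X] [PseudoMetricSpace Y] {a b : ℝ}

theorem AbsolutelyContinuousOnInterval.congr {f g : ℝ → X}
    (hf : AbsolutelyContinuousOnInterval f a b) (hfg : EqOn f g (uIcc a b)) :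
    AbsolutelyContinuousOnInterval g a b := by
  rw [absolutelyContinuousOnInterval_iff] at hf ⊢
  intro ε hε
  obtain ⟨δ, hδ, hf⟩ := hf ε hε
  refine ⟨δ, hδ, fun E hE hlen => ?_⟩
  convert hf E hE hlen using 2 with i hi
  rw [hfg (hE.1 i hi).1, hfg (hE.1 i hi).2]

theorem LipschitzOnWith.comp_absolutelyContinuousOnInterval {f : ℝ → X} {g : X → Y} {K : ℝ≥0}
    {s : Set X} (hg : LipschitzOnWith K g s) (hf : AbsolutelyContinuousOnInterval f a b)
    (hfs : MapsTo f (uIcc a b) s) : AbsolutelyContinuousOnInterval (g ∘ f) a b := by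
  rw [absolutelyContinuousOnInterval_iff] at hf ⊢
  intro ε hε
  obtain ⟨δ, hδ, hf⟩ := hf (ε / (K + 1)) (by positivity)
  refine ⟨δ, hδ, fun E hE hlen => ?_⟩
  calc ∑ i ∈ Finset.range E.1, dist ((g ∘ f) (E.2 i).1) ((g ∘ f) (E.2 i).2)
      ≤ ∑ i ∈ Finset.range E.1, K * dist (f (E.2 i).1) (f (E.2 i).2) := by
        gcongr with i hi
        exact hg.dist_le_mul _ (hfs (hE.1 i hi).1) _ (hfs (hE.1 i hi).2)
    _ = K * ∑ i ∈ Finset.range E.1, dist (f (E.2 i).1) (f (E.2 i).2) := by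
        rw [Finset.mul_sum]
    _ ≤ K * (ε / (K + 1)) := by gcongr; exact (hf E hE hlen).le
    _ < ε := by
        rw [mul_div_assoc', div_lt_iff₀ (by positivity)]
        linarith

theorem LocallyLipschitz.comp_absolutelyContinuousOnInterval {F : Type*}
    [SeminormedAddCommGroup F] {f : ℝ → F} {g : F → Y} (hg : LocallyLipschitz g)
    (hf : AbsolutelyContinuousOnInterval f a b) :
    AbsolutelyContinuousOnInterval (g ∘ f) a b := by
  have hcpt : IsCompact (f '' uIcc a b) := isCompact_uIcc.image_of_continuousOn hf.continuousOn
  obtain ⟨K, hK⟩ := hg.locallyLipschitzOn.exists_lipschitzOnWith_of_compact hcpt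
  exact hK.comp_absolutelyContinuousOnInterval hf (mapsTo_image f _)

variable {f f' : ℝ → ℝ}

theorem IntervalIntegrable.absolutelyContinuousOnInterval_of_sub_eq_integral
    (hf' : IntervalIntegrable f' volume a b)
    (hf : ∀ x ∈ uIcc a b, f x - f a = ∫ τ in a..x, f' τ) :
    AbsolutelyContinuousOnInterval f a b := by
  have hconst : AbsolutelyContinuousOnInterval (fun _ => f a) a b :=
    (LipschitzWith.const (f a)).lipschitzOnWith.absolutelyContinuousOnInterval
  refine (hconst.add (hf'.absolutelyContinuousOnInterval_intervalIntegral left_mem_uIcc)).congr ?_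
  intro x hx
  simp only [Pi.add_apply]
  linarith [hf x hx]

theorem IntervalIntegrable.ae_hasDerivAt_of_sub_eq_integral
    (hf' : IntervalIntegrable f' volume a b)
    (hf : ∀ x ∈ uIcc a b, f x - f a = ∫ τ in a..x, f' τ) :
    ∀ᵐ x, x ∈ uIcc a b → HasDerivAt f (f' x) x := by
  have hne : ∀ c : ℝ, ∀ᵐ x, x ≠ c := fun c => by simp [ae_iff, measure_singleton]
  filter_upwards [hf'.ae_hasDerivAt_integral, hne a, hne b] with x hderiv hxa hxb hx
  have hmem : uIcc a b ∈ 𝓝 x := by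
    rw [uIcc] at hx ⊢
    exact Icc_mem_nhds (lt_of_le_of_ne hx.1 (by grind)) (lt_of_le_of_ne hx.2 (by grind))
  refine ((hderiv hx a left_mem_uIcc).const_add (f a)).congr_of_eventuallyEq ?_
  filter_upwards [hmem] with y hy
  linarith [hf y hy]

theorem AbsolutelyContinuousOnInterval.le_of_ae_deriv_nonpos
    (hf : AbsolutelyContinuousOnInterval f a b) (hab : a ≤ b)
    (hf' : ∀ᵐ x, x ∈ uIcc a b → deriv f x ≤ 0) : f b ≤ f a := by
  rw [uIcc_of_le hab] at hf'
  have : ∫ x in a..b, deriv f x ≤ ∫ _ in a..b, (0 : ℝ) :=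
    intervalIntegral.integral_mono_ae_restrict hab hf.intervalIntegrable_deriv
      intervalIntegrable_const ((ae_restrict_iff' measurableSet_Icc).2 hf')
  rw [hf.integral_deriv_eq_sub, intervalIntegral.integral_zero] at this
  linarith

end AbsolutelyContinuous

theorem le_mul_exp_integral_of_sub_eq_integral {Λ Λ' β : ℝ → ℝ} {a b : ℝ} (hab : a ≤ b)
    (hΛ' : IntervalIntegrable Λ' volume a b)
    (hΛ : ∀ x ∈ Icc a b, Λ x - Λ a = ∫ τ in a..x, Λ' τ)
    (hβ : IntervalIntegrable β volume a b) (hle : ∀ᵐ x, x ∈ Icc a b → Λ' x ≤ β x * Λ x) :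
    Λ b ≤ Λ a * Real.exp (∫ τ in a..b, β τ) := by
  rw [← uIcc_of_le hab] at hΛ hle
  set B : ℝ → ℝ := fun x => ∫ τ in a..x, β τ
  have hB : ∀ x ∈ uIcc a b, B x - B a = ∫ τ in a..x, β τ := by simp [B]
  set G : ℝ → ℝ := fun x => Λ x * Real.exp (-B x)
  have hG : AbsolutelyContinuousOnInterval G a b :=
    (hΛ'.absolutelyContinuousOnInterval_of_sub_eq_integral hΛ).mul
      (Real.contDiff_exp.locallyLipschitz.comp_absolutelyContinuousOnInterval
        (hβ.absolutelyContinuousOnInterval_of_sub_eq_integral hB).neg)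
  have hG' : ∀ᵐ x, x ∈ uIcc a b → deriv G x ≤ 0 := by
    filter_upwards [hΛ'.ae_hasDerivAt_of_sub_eq_integral hΛ,
      hβ.ae_hasDerivAt_of_sub_eq_integral hB, hle] with x hΛx hBx hlex hx
    have hGx : HasDerivAt G (Λ' x * Real.exp (-B x) + Λ x * (Real.exp (-B x) * -β x)) x :=
      (hΛx hx).mul (hBx hx).neg.exp
    rw [hGx.deriv]
    have := mul_le_mul_of_nonneg_left (hlex hx) (Real.exp_nonneg (-B x))
    linarith
  calc Λ b = G b * Real.exp (B b) := by simp [G, mul_assoc, ← Real.exp_add]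
    _ ≤ G a * Real.exp (B b) := by gcongr; exact hG.le_of_ae_deriv_nonpos hab hG'
    _ = Λ a * Real.exp (∫ τ in a..b, β τ) := by simp [G, B]

theorem stmt_1_general
    (Λ Λ' ψ : ℝ → ℝ) (ν K : ℝ) (hK : 0 ≤ K)
    (hΛnn : ∀ t, 0 ≤ t → 0 ≤ Λ t)
    (hΛ'int : ∀ s t : ℝ, 0 ≤ s → s ≤ t → IntervalIntegrable Λ' volume s t)
    (hFTC : ∀ s t : ℝ, 0 ≤ s → s ≤ t → Λ t - Λ s = ∫ τ in s..t, Λ' τ)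
    (hψint : ∀ s t : ℝ, 0 ≤ s → s ≤ t → IntervalIntegrable ψ volume s t)
    (hψbound : ∀ s t : ℝ, 0 ≤ s → s < t → (∫ τ in s..t, ψ τ) ≤ ν * (t - s) + K)
    (hineq : ∀ᵐ t ∂volume, 0 ≤ t → Λ' t + 2 * ν * Λ t ≤ ψ t * Λ t) :
    ∀ t : ℝ, 0 ≤ t → Λ t ≤ Real.exp K * Λ 0 * Real.exp (-ν * t) := by
  intro t ht
  have hψ0t := hψint 0 t le_rfl ht
  have hgronwall : Λ t ≤ Λ 0 * Real.exp (∫ τ in 0..t, (ψ τ - 2 * ν)) := by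
    refine le_mul_exp_integral_of_sub_eq_integral ht (hΛ'int 0 t le_rfl ht)
      (fun x hx => hFTC 0 x le_rfl hx.1) (hψ0t.sub intervalIntegrable_const) ?_
    filter_upwards [hineq] with x hx hx0
    linarith [hx hx0.1]
  have hexponent : ∫ τ in 0..t, (ψ τ - 2 * ν) ≤ K + -ν * t := by
    rw [intervalIntegral.integral_sub hψ0t intervalIntegrable_const,
      intervalIntegral.integral_const, smul_eq_mul]
    rcases ht.eq_or_lt with rfl | htpos
    · simpa using hK
    · linarith [hψbound 0 t le_rfl htpos]
  calc Λ t ≤ Λ 0 * Real.exp (∫ τ in 0..t, (ψ τ - 2 * ν)) := hgronwall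
    _ ≤ Λ 0 * Real.exp (K + -ν * t) := by gcongr; exact hΛnn 0 le_rfl
    _ = Real.exp K * Λ 0 * Real.exp (-ν * t) := by rw [Real.exp_add]; ring

/-- Gronwall-type lemma with a translation-bounded coefficient (Lemma 5.3 / `GRNWOLD`).
If `Λ' t + 2ν * Λ t ≤ ψ t * Λ t` a.e. on `[0,∞)`, with
`∫_s^t ψ ≤ ν (t - s) + K` for all `t > s ≥ 0`, then
`Λ t ≤ exp K * Λ 0 * exp (-ν t)` for all `t ≥ 0`. -/
theorem stmt_1
    (Λ Λ' ψ : ℝ → ℝ) (ν K : ℝ) (hν : 0 < ν) (hK : 0 ≤ K)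
    (hΛnn : ∀ t, 0 ≤ t → 0 ≤ Λ t)
    (hψnn : ∀ t, 0 ≤ t → 0 ≤ ψ t)
    (hΛ'int : ∀ s t : ℝ, 0 ≤ s → s ≤ t → IntervalIntegrable Λ' volume s t)
    (hFTC : ∀ s t : ℝ, 0 ≤ s → s ≤ t → Λ t - Λ s = ∫ τ in s..t, Λ' τ)
    (hψint : ∀ s t : ℝ, 0 ≤ s → s ≤ t → IntervalIntegrable ψ volume s t)
    (hψbound : ∀ s t : ℝ, 0 ≤ s → s < t → (∫ τ in s..t, ψ τ) ≤ ν * (t - s) + K)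
    (hineq : ∀ᵐ t ∂volume, 0 ≤ t → Λ' t + 2 * ν * Λ t ≤ ψ t * Λ t) :
    ∀ t : ℝ, 0 ≤ t → Λ t ≤ Real.exp K * Λ 0 * Real.exp (-ν * t) :=
  stmt_1_general Λ Λ' ψ ν K hK hΛnn hΛ'int hFTC hψint hψbound hineq
end

section
/- Every complex root z of the polynomial X³ − X² + 2X − 1 satisfies Re z > 0, and the polynomial has three pairwise distinct complex roots. -/
/-- Every complex root of `X³ - X² + 2X - 1` has strictly positive real part, and the
polynomial has three pairwise distinct complex roots. -/
theorem stmt_3 :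
    (∀ z : ℂ, z ^ 3 - z ^ 2 + 2 * z - 1 = 0 → 0 < z.re) ∧
    (∃ z₁ z₂ z₃ : ℂ, z₁ ≠ z₂ ∧ z₁ ≠ z₃ ∧ z₂ ≠ z₃ ∧
      z₁ ^ 3 - z₁ ^ 2 + 2 * z₁ - 1 = 0 ∧
      z₂ ^ 3 - z₂ ^ 2 + 2 * z₂ - 1 = 0 ∧
      z₃ ^ 3 - z₃ ^ 2 + 2 * z₃ - 1 = 0) := by
  constructor
  · intro z hz
    by_contra hx
    push_neg at hx
    set x := z.re with hxd
    set y := z.im with hyd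
    have hre : x^3 - 3*x*y^2 - x^2 + y^2 + 2*x - 1 = 0 := by
      have := congrArg Complex.re hz
      simp [pow_succ, Complex.mul_re, Complex.mul_im, Complex.sub_re, Complex.add_re,
        Complex.one_re] at this
      linarith [this]
    have him : y * (3*x^2 - 2*x - y^2 + 2) = 0 := by
      have := congrArg Complex.im hz
      simp [pow_succ, Complex.mul_re, Complex.mul_im, Complex.sub_im, Complex.add_im,
        Complex.one_im] at this
      nlinarith [this]
    rcases mul_eq_zero.1 him with hy | hq
    · rw [hy] at hre; nlinarith
    · have hy2 : y^2 = 3*x^2 - 2*x + 2 := by linarith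
      rw [hy2] at hre; nlinarith
  · -- real root by IVT
    have hcont : ContinuousOn (fun x : ℝ => x^3 - x^2 + 2*x - 1) (Set.Icc 0 1) := by
      fun_prop
    have h0 : (0:ℝ) ∈ Set.Icc ((fun x : ℝ => x^3 - x^2 + 2*x - 1) 0)
        ((fun x : ℝ => x^3 - x^2 + 2*x - 1) 1) := by norm_num
    obtain ⟨r, hr01, hr⟩ := intermediate_value_Icc zero_le_one hcont h0
    simp only at hr
    set s := Real.sqrt (3*r^2 - 2*r + 7) with hsd
    have hpos : (0:ℝ) < 3*r^2 - 2*r + 7 := by nlinarith [sq_nonneg (3*r - 1)]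
    have hspos : 0 < s := Real.sqrt_pos.2 hpos
    have hs : s^2 = 3*r^2 - 2*r + 7 := Real.sq_sqrt hpos.le
    have hrC : (r:ℂ)^3 - (r:ℂ)^2 + 2*(r:ℂ) - 1 = 0 := by
      exact_mod_cast congrArg (Complex.ofReal) hr
    have hsC : (s:ℂ)^2 = 3*(r:ℂ)^2 - 2*(r:ℂ) + 7 := by
      exact_mod_cast congrArg (Complex.ofReal) hs
    refine ⟨(r:ℂ), ((1-r) + s*Complex.I)/2, ((1-r) - s*Complex.I)/2, ?_, ?_, ?_, ?_, ?_, ?_⟩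
    · intro h
      have := congrArg Complex.im h
      simp at this
      linarith
    · intro h
      have := congrArg Complex.im h
      simp at this
      linarith
    · intro h
      have := congrArg Complex.im h
      simp at this
      linarith
    · linear_combination hrC
    · linear_combination hrC + ((((1-r) + s*Complex.I)/2 - (r:ℂ))/4) * ((s:ℂ)^2) * Complex.I_sq
        - ((((1-r) + s*Complex.I)/2 - (r:ℂ))/4) * hsC
    · linear_combination hrC + ((((1-r) - s*Complex.I)/2 - (r:ℂ))/4) * ((s:ℂ)^2) * Complex.I_sq
        - ((((1-r) - s*Complex.I)/2 - (r:ℂ))/4) * hsC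
end

section
/- Let E : [0,∞) → [0,∞) and let Λ : [0,∞) → [0,∞) be absolutely continuous on every compact subinterval of [0,∞), and suppose there is a constant C ≥ 0 such that (1/2)·E(t) ≤ Λ(t) ≤ 2·E(t) + C for all t ≥ 0. Let φ : [0,∞) → [0,∞) be locally integrable with sup_{t≥0} ∫_t^{t+1} φ(τ) dτ ≤ Q for some Q ≥ 0, and assume there exist K ≥ 0 and ε₀ > 0 such that for every ε ∈ (0, ε₀], Λ'(t) + ε·Λ(t) ≤ K·ε²·Λ(t)^{3/2} + ε^{−2/3}·φ(t) for almost every t ≥ 0. Then there exists R₀ > 0 such that for every R ≥ 0 there exists t₀ ≥ 0 with the property that E(0) ≤ R implies E(t) ≤ R₀ for all t ≥ t₀. -/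
open MeasureTheory

set_option maxHeartbeats 1600000 in
/-- Real-analysis core of the absorbing-set theorem: if the energy `E` is two-sidedly
comparable to an auxiliary functional `Λ` satisfying the hypotheses of the Gronwall-type
lemma with parameter, then the energy is uniformly eventually bounded, with an entering
time depending only on the bound `R` on the initial energy. -/
theorem stmt_10
    (E Λ Λ' φ : ℝ → ℝ)
    (hEnn : ∀ t, 0 ≤ t → 0 ≤ E t)
    (hΛnn : ∀ t, 0 ≤ t → 0 ≤ Λ t)
    (C : ℝ) (hC : 0 ≤ C)
    (hcomp : ∀ t, 0 ≤ t → (1 / 2) * E t ≤ Λ t ∧ Λ t ≤ 2 * E t + C)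
    (hφnn : ∀ t, 0 ≤ t → 0 ≤ φ t)
    (hΛ'int : ∀ s t : ℝ, 0 ≤ s → s ≤ t → IntervalIntegrable Λ' volume s t)
    (hFTC : ∀ s t : ℝ, 0 ≤ s → s ≤ t → Λ t - Λ s = ∫ τ in s..t, Λ' τ)
    (hφint : ∀ s t : ℝ, 0 ≤ s → s ≤ t → IntervalIntegrable φ volume s t)
    (Q : ℝ) (hQ : 0 ≤ Q)
    (hφQ : ∀ t : ℝ, 0 ≤ t → (∫ τ in t..(t + 1), φ τ) ≤ Q)
    (K ε₀ : ℝ) (hK : 0 ≤ K) (hε₀ : 0 < ε₀)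
    (hineq : ∀ ε : ℝ, ε ∈ Set.Ioc 0 ε₀ →
      ∀ᵐ t ∂volume, 0 ≤ t →
        Λ' t + ε * Λ t ≤ K * ε ^ 2 * (Λ t) ^ ((3 : ℝ) / 2) + ε ^ (-(2 : ℝ) / 3) * φ t) :
    ∃ R₀ > (0 : ℝ), ∀ R : ℝ, 0 ≤ R → ∃ t₀ : ℝ, 0 ≤ t₀ ∧
      (E 0 ≤ R → ∀ t : ℝ, t₀ ≤ t → E t ≤ R₀) := by
  -- continuity of Λ on [0, ∞)
  have hΛcont : ContinuousOn Λ (Set.Ici 0) := by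
    intro t ht
    have ht' : (0:ℝ) ≤ t := ht
    have hmem : Set.Icc (0:ℝ) (t+1) ∈ nhdsWithin t (Set.Ici 0) := by
      rw [show Set.Icc (0:ℝ) (t+1) = Set.Ici (0:ℝ) ∩ Set.Iic (t+1) from (Set.Ici_inter_Iic).symm]
      exact Filter.inter_mem self_mem_nhdsWithin
        (mem_nhdsWithin_of_mem_nhds (Iic_mem_nhds (lt_add_one t)))
    have hcont : ContinuousOn Λ (Set.Icc 0 (t+1)) := by
      have hint : IntervalIntegrable Λ' volume 0 (t+1) := hΛ'int 0 (t+1) le_rfl (by linarith)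
      have hprim : ContinuousOn (fun b => ∫ x in (0:ℝ)..b, Λ' x) (Set.uIcc (0:ℝ) (t+1)) :=
        intervalIntegral.continuousOn_primitive_interval' hint Set.left_mem_uIcc
      rw [Set.uIcc_of_le (by linarith : (0:ℝ) ≤ t+1)] at hprim
      have haux : ContinuousOn (fun b => Λ 0 + ∫ x in (0:ℝ)..b, Λ' x) (Set.Icc 0 (t+1)) :=
        continuousOn_const.add hprim
      refine haux.congr ?_
      intro x hx
      simp only []
      linarith [hFTC 0 x le_rfl hx.1]
    exact (hcont t ⟨ht', by linarith⟩).mono_of_mem_nhdsWithin hmem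
  have hΛii : ∀ u v : ℝ, 0 ≤ u → u ≤ v → IntervalIntegrable Λ volume u v := by
    intro u v hu huv
    apply ContinuousOn.intervalIntegrable
    apply hΛcont.mono
    rw [Set.uIcc_of_le huv]
    intro x hx
    exact le_trans hu hx.1
  -- constants
  set m : ℝ := min ε₀ 1 with hm_def
  have hm0 : 0 < m := lt_min hε₀ one_pos
  have hm1 : m ≤ 1 := min_le_right _ _
  have hmε₀ : m ≤ ε₀ := min_le_left _ _
  set B : ℝ := 1 + 8 * K with hB_def
  have hB1 : 1 ≤ B := by simp [hB_def]; linarith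
  have hB0 : 0 < B := by linarith
  set c : ℝ := m / B with hc_def
  have hc0 : 0 < c := div_pos hm0 hB0
  have hc1 : c ≤ 1 := by rw [hc_def, div_le_one hB0]; linarith
  set ρ : ℝ := 1 + (8 * Q / c ^ 2) ^ 6 with hρ_def
  have hρ1 : 1 ≤ ρ := le_add_of_nonneg_right (by positivity)
  have hρ0 : 0 < ρ := by linarith
  set eps : ℝ → ℝ := fun a => min m ((B * Real.sqrt a)⁻¹) with heps_def
  -- basic properties of eps
  have heps_pos : ∀ a : ℝ, 1 ≤ a → 0 < eps a := by
    intro a ha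
    have : 0 < Real.sqrt a := Real.sqrt_pos.2 (by linarith)
    exact lt_min hm0 (by positivity)
  have heps_le_m : ∀ a : ℝ, eps a ≤ m := fun a => min_le_left _ _
  have heps_mem : ∀ a : ℝ, 1 ≤ a → eps a ∈ Set.Ioc 0 ε₀ := by
    intro a ha
    exact ⟨heps_pos a ha, le_trans (heps_le_m a) hmε₀⟩
  have hcB : c * B = m := div_mul_cancel₀ m hB0.ne'
  have heps_lb : ∀ a : ℝ, 1 ≤ a → c / Real.sqrt a ≤ eps a := by
    intro a ha
    have hs1 : 1 ≤ Real.sqrt a := by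
      rw [show (1:ℝ) = Real.sqrt 1 from Real.sqrt_one.symm]
      exact Real.sqrt_le_sqrt ha
    have hs0 : (0:ℝ) < Real.sqrt a := by linarith
    refine le_min ?_ ?_
    · have h1 : c / Real.sqrt a ≤ c := div_le_self hc0.le hs1
      have h2 : c ≤ m := by rw [hc_def]; exact div_le_self hm0.le hB1
      linarith
    · rw [inv_eq_one_div, div_le_div_iff₀ hs0 (by positivity)]
      nlinarith
  have heps_anti : ∀ a b : ℝ, 1 ≤ a → a ≤ b → eps b ≤ eps a := by
    intro a b ha hab
    refine min_le_min le_rfl ?_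
    have hsa : 0 < Real.sqrt a := Real.sqrt_pos.2 (by linarith)
    have hmul : B * Real.sqrt a ≤ B * Real.sqrt b :=
      mul_le_mul_of_nonneg_left (Real.sqrt_le_sqrt hab) hB0.le
    exact inv_anti₀ (by positivity) hmul
  -- absorption property
  have habs : ∀ a : ℝ, 1 ≤ a → ∀ x : ℝ, 0 ≤ x → x ≤ 2 * a →
      K * (eps a) ^ 2 * x ^ ((3 : ℝ) / 2) ≤ eps a / 2 * x := by
    intro a ha x hx0 hx2a
    have hε := heps_pos a ha
    have hsa : 0 < Real.sqrt a := Real.sqrt_pos.2 (by linarith)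
    have hx32 : x ^ ((3:ℝ)/2) ≤ Real.sqrt (2*a) * x := by
      rcases eq_or_lt_of_le hx0 with h | h
      · rw [← h, Real.zero_rpow (by norm_num)]; simp
      · have h1 : x ^ ((3:ℝ)/2) = x ^ ((1:ℝ)/2) * x ^ (1:ℝ) := by
          rw [← Real.rpow_add h]; norm_num
        rw [h1, Real.rpow_one, ← Real.sqrt_eq_rpow]
        exact mul_le_mul_of_nonneg_right (Real.sqrt_le_sqrt hx2a) hx0
    have hKe : K * eps a * Real.sqrt (2*a) ≤ 1/2 := by
      have h2a : Real.sqrt (2*a) = Real.sqrt 2 * Real.sqrt a := Real.sqrt_mul (by norm_num) a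
      have hsqrt2 : Real.sqrt 2 ≤ 2 := by
        have h4 : Real.sqrt 2 ≤ Real.sqrt 4 := Real.sqrt_le_sqrt (by norm_num)
        rwa [show (4:ℝ) = 2^2 by norm_num, Real.sqrt_sq (by norm_num : (0:ℝ) ≤ 2)] at h4
      have heB : eps a ≤ (B * Real.sqrt a)⁻¹ := min_le_right _ _
      have hstep : K * eps a * Real.sqrt (2*a) ≤ K * (B * Real.sqrt a)⁻¹ * (2 * Real.sqrt a) := by
        apply mul_le_mul
        · exact mul_le_mul_of_nonneg_left heB hK
        · rw [h2a]; exact mul_le_mul_of_nonneg_right hsqrt2 hsa.le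
        · positivity
        · positivity
      have heq : K * (B * Real.sqrt a)⁻¹ * (2 * Real.sqrt a) = 2 * K / B := by
        field_simp
      rw [heq] at hstep
      have hfin : 2 * K / B ≤ 1/2 := by
        rw [div_le_iff₀ hB0]; simp only [hB_def]; linarith
      linarith
    calc K * (eps a)^2 * x ^ ((3:ℝ)/2) ≤ K * (eps a)^2 * (Real.sqrt (2*a) * x) := by
          apply mul_le_mul_of_nonneg_left hx32 (by positivity)
      _ = (K * eps a * Real.sqrt (2*a)) * (eps a * x) := by ring
      _ ≤ (1/2) * (eps a * x) := by
          apply mul_le_mul_of_nonneg_right hKe (by positivity)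
      _ = eps a / 2 * x := by ring
  -- the key quantitative bound
  have hQb : ∀ a : ℝ, ρ ≤ a → (eps a) ^ (-(2 : ℝ) / 3) * Q ≤ eps a * a / 8 := by
    intro a ha
    have ha1 : (1:ℝ) ≤ a := le_trans hρ1 ha
    have hapos : (0:ℝ) < a := by linarith
    have hε := heps_pos a ha1
    have hεlb := heps_lb a ha1
    set y : ℝ := 8 * Q / c ^ 2 with hy_def
    have hy0 : 0 ≤ y := by positivity
    have e1 : (c / Real.sqrt a) ^ ((5:ℝ)/3) ≤ (eps a) ^ ((5:ℝ)/3) :=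
      Real.rpow_le_rpow (by positivity) hεlb (by norm_num)
    have e2 : (c / Real.sqrt a) ^ ((5:ℝ)/3) = c ^ ((5:ℝ)/3) / (Real.sqrt a) ^ ((5:ℝ)/3) :=
      Real.div_rpow hc0.le (Real.sqrt_nonneg a) _
    have e3 : (Real.sqrt a) ^ ((5:ℝ)/3) = a ^ ((5:ℝ)/6) := by
      rw [Real.sqrt_eq_rpow, ← Real.rpow_mul hapos.le]
      norm_num
    have e4 : a ^ ((1:ℝ)/6) * a ^ ((5:ℝ)/6) = a := by
      rw [← Real.rpow_add hapos]
      norm_num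
    have e5 : c ^ (2:ℝ) ≤ c ^ ((5:ℝ)/3) :=
      Real.rpow_le_rpow_of_exponent_ge hc0 hc1 (by norm_num)
    have e6 : c ^ (2:ℝ) = c ^ 2 := by
      rw [show (2:ℝ) = ((2:ℕ):ℝ) by norm_num, Real.rpow_natCast]
    have e7 : y ≤ a ^ ((1:ℝ)/6) := by
      have h1 : (y ^ 6 : ℝ) ^ ((1:ℝ)/6) ≤ a ^ ((1:ℝ)/6) :=
        Real.rpow_le_rpow (by positivity) (by rw [hρ_def] at ha; linarith) (by norm_num)
      have h2 : (y ^ 6 : ℝ) ^ ((1:ℝ)/6) = y := by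
        rw [← Real.rpow_natCast y 6, ← Real.rpow_mul hy0]
        norm_num
      linarith [h1, h2 ▸ h1]
    have h56 : (0:ℝ) < a ^ ((5:ℝ)/6) := Real.rpow_pos_of_pos hapos _
    have key : 8 * Q ≤ (eps a) ^ ((5:ℝ)/3) * a := by
      calc 8 * Q = c ^ 2 * y := by rw [hy_def]; field_simp
        _ ≤ c ^ 2 * a ^ ((1:ℝ)/6) := mul_le_mul_of_nonneg_left e7 (sq_nonneg c)
        _ ≤ c ^ ((5:ℝ)/3) * a ^ ((1:ℝ)/6) := by
            rw [← e6]; exact mul_le_mul_of_nonneg_right e5 (Real.rpow_nonneg hapos.le _)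
        _ = c ^ ((5:ℝ)/3) / a ^ ((5:ℝ)/6) * a := by
            rw [div_mul_eq_mul_div, eq_div_iff h56.ne', mul_assoc, mul_comm (a ^ ((1:ℝ)/6))]
            rw [mul_comm (a ^ ((5:ℝ)/6))]
            rw [e4]
        _ = (c / Real.sqrt a) ^ ((5:ℝ)/3) * a := by rw [e2, e3]
        _ ≤ (eps a) ^ ((5:ℝ)/3) * a := mul_le_mul_of_nonneg_right e1 hapos.le
    have h23 : (eps a) ^ (-(2:ℝ)/3) * (eps a) ^ ((5:ℝ)/3) = eps a := by
      rw [← Real.rpow_add hε]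
      norm_num
    calc (eps a) ^ (-(2:ℝ)/3) * Q = (eps a) ^ (-(2:ℝ)/3) * (8 * Q) / 8 := by ring
      _ ≤ (eps a) ^ (-(2:ℝ)/3) * ((eps a) ^ ((5:ℝ)/3) * a) / 8 := by
          have := mul_le_mul_of_nonneg_left key (Real.rpow_nonneg hε.le (-(2:ℝ)/3))
          linarith
      _ = ((eps a) ^ (-(2:ℝ)/3) * (eps a) ^ ((5:ℝ)/3)) * a / 8 := by ring
      _ = eps a * a / 8 := by rw [h23]
  clear hm_def hB_def hc_def hρ_def heps_def hcB
  clear_value m B c ρ eps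
  -- integrated differential inequality
  have key_int : ∀ u v : ℝ, 0 ≤ u → u ≤ v → ∀ ε : ℝ, ε ∈ Set.Ioc 0 ε₀ →
      (∀ τ ∈ Set.Ico u v, K * ε ^ 2 * (Λ τ) ^ ((3 : ℝ) / 2) ≤ ε / 2 * Λ τ) →
      Λ v ≤ Λ u - ε / 2 * (∫ τ in u..v, Λ τ) + ε ^ (-(2 : ℝ) / 3) * (∫ τ in u..v, φ τ) := by
    intro u v hu huv ε hε hpt
    have hΛuv := hΛii u v hu huv
    have hφuv := hφint u v hu huv
    have hg : IntervalIntegrable (fun τ => -(ε/2) * Λ τ + ε ^ (-(2:ℝ)/3) * φ τ) volume u v :=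
      (hΛuv.const_mul _).add (hφuv.const_mul _)
    have hvne : ∀ᵐ τ ∂(volume.restrict (Set.Icc u v)), τ ≠ v := by
      apply ae_restrict_of_ae
      rw [ae_iff]
      simpa using measure_singleton v
    have hmono : (∫ τ in u..v, Λ' τ) ≤ ∫ τ in u..v, (-(ε/2) * Λ τ + ε ^ (-(2:ℝ)/3) * φ τ) := by
      apply intervalIntegral.integral_mono_ae_restrict huv (hΛ'int u v hu huv) hg
      filter_upwards [ae_restrict_of_ae (hineq ε hε), ae_restrict_mem measurableSet_Icc, hvne]
        with τ h1 h2 h3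
      have hτ0 : 0 ≤ τ := le_trans hu h2.1
      have h4 := h1 hτ0
      have h5 : τ ∈ Set.Ico u v := ⟨h2.1, lt_of_le_of_ne h2.2 h3⟩
      have h6 := hpt τ h5
      linarith
    have hsplit : (∫ τ in u..v, (-(ε/2) * Λ τ + ε ^ (-(2:ℝ)/3) * φ τ))
        = -(ε/2) * (∫ τ in u..v, Λ τ) + ε ^ (-(2:ℝ)/3) * (∫ τ in u..v, φ τ) := by
      rw [intervalIntegral.integral_add (hΛuv.const_mul _) (hφuv.const_mul _),
        intervalIntegral.integral_const_mul, intervalIntegral.integral_const_mul]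
    have hftc := hFTC u v hu huv
    rw [hsplit] at hmono
    linarith
  -- bound on φ integrals over subintervals of unit intervals
  have hφsub : ∀ s u v : ℝ, 0 ≤ s → s ≤ u → u ≤ v → v ≤ s + 1 →
      (∫ τ in u..v, φ τ) ≤ Q := by
    intro s u v hs hsu huv hv
    refine le_trans ?_ (hφQ s hs)
    refine intervalIntegral.integral_mono_interval hsu huv hv ?_ (hφint s (s+1) hs (by linarith))
    filter_upwards [ae_restrict_mem measurableSet_Ioc] with τ hτ
    exact hφnn τ (le_trans hs hτ.1.le)
  -- barrier lemma
  have barrier : ∀ s a : ℝ, 0 ≤ s → ρ ≤ a → Λ s ≤ a → ∀ t ∈ Set.Icc s (s + 1), Λ t ≤ 2 * a := by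
    intro s a hs hρa hΛs t htm
    have ha1 : (1:ℝ) ≤ a := le_trans hρ1 hρa
    by_contra hcon
    push_neg at hcon
    set T : Set ℝ := Set.Icc s (s+1) ∩ Λ ⁻¹' Set.Ici (2*a) with hT_def
    have hTne : T.Nonempty := ⟨t, htm, le_of_lt hcon⟩
    have hsub : Set.Icc s (s+1) ⊆ Set.Ici (0:ℝ) := fun x hx => le_trans hs hx.1
    have hTclosed : IsClosed T :=
      (hΛcont.mono hsub).preimage_isClosed_of_isClosed isClosed_Icc isClosed_Ici
    have hTcomp : IsCompact T := isCompact_Icc.of_isClosed_subset hTclosed Set.inter_subset_left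
    set w : ℝ := sInf T with hw_def
    have hw : w ∈ T := hTcomp.sInf_mem hTne
    have hws : s ≤ w := hw.1.1
    have hw1 : w ≤ s + 1 := hw.1.2
    have hΛw : 2 * a ≤ Λ w := hw.2
    have hbd : ∀ τ ∈ Set.Ico s w, Λ τ ≤ 2 * a := by
      intro τ hτ
      by_contra hτc
      push_neg at hτc
      have hτT : τ ∈ T := ⟨⟨hτ.1, le_trans hτ.2.le hw1⟩, hτc.le⟩
      exact absurd (csInf_le hTcomp.bddBelow hτT) (not_le.2 hτ.2)
    have hεm := heps_mem a ha1
    have hkey := key_int s w hs hws (eps a) hεm (fun τ hτ =>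
      habs a ha1 (Λ τ) (hΛnn τ (le_trans hs hτ.1)) (hbd τ hτ))
    have hIΛ : 0 ≤ ∫ τ in s..w, Λ τ :=
      intervalIntegral.integral_nonneg hws (fun τ hτ => hΛnn τ (le_trans hs hτ.1))
    have hIφ : (∫ τ in s..w, φ τ) ≤ Q := hφsub s s w hs le_rfl hws hw1
    have hεQ : (eps a) ^ (-(2:ℝ)/3) * Q ≤ eps a * a / 8 := hQb a hρa
    have hε1 : eps a ≤ 1 := le_trans (heps_le_m a) hm1
    have h1 : (eps a) ^ (-(2:ℝ)/3) * (∫ τ in s..w, φ τ) ≤ (eps a) ^ (-(2:ℝ)/3) * Q :=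
      mul_le_mul_of_nonneg_left hIφ (Real.rpow_nonneg hεm.1.le _)
    have h2 : eps a * a / 8 ≤ a / 8 := by nlinarith [hεm.1.le]
    nlinarith [mul_le_mul_of_nonneg_left hIΛ hεm.1.le]
  -- one-step decay lemma
  have step : ∀ s a : ℝ, 0 ≤ s → ρ ≤ a → Λ s ≤ a →
      Λ (s + 1) ≤ max (Λ s - eps a * a / 8) (5 * a / 8) := by
    intro s a hs hρa hΛs
    have ha1 : (1:ℝ) ≤ a := le_trans hρ1 hρa
    have hεm := heps_mem a ha1
    have hε1 : eps a ≤ 1 := le_trans (heps_le_m a) hm1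
    have hεQ : (eps a) ^ (-(2:ℝ)/3) * Q ≤ eps a * a / 8 := hQb a hρa
    have hbar := barrier s a hs hρa hΛs
    by_cases hcase : ∀ τ ∈ Set.Icc s (s+1), a/2 ≤ Λ τ
    · have hkey := key_int s (s+1) hs (by linarith) (eps a) hεm (fun τ hτ =>
        habs a ha1 (Λ τ) (hΛnn τ (le_trans hs hτ.1)) (hbar τ ⟨hτ.1, hτ.2.le⟩))
      have hIΛ : a/2 * 1 ≤ ∫ τ in s..(s+1), Λ τ := by
        have hconst : (∫ τ in s..(s+1), (a/2 : ℝ)) ≤ ∫ τ in s..(s+1), Λ τ :=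
          intervalIntegral.integral_mono_on (by linarith) intervalIntegrable_const
            (hΛii s (s+1) hs (by linarith)) hcase
        rw [intervalIntegral.integral_const] at hconst
        simp only [smul_eq_mul] at hconst
        linarith
      have hIφ : (∫ τ in s..(s+1), φ τ) ≤ Q := hφsub s s (s+1) hs le_rfl (by linarith) le_rfl
      have h1 : (eps a) ^ (-(2:ℝ)/3) * (∫ τ in s..(s+1), φ τ) ≤ (eps a) ^ (-(2:ℝ)/3) * Q :=
        mul_le_mul_of_nonneg_left hIφ (Real.rpow_nonneg hεm.1.le _)
      have h2 : eps a / 2 * (a/2) ≤ eps a / 2 * (∫ τ in s..(s+1), Λ τ) := by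
        apply mul_le_mul_of_nonneg_left (by linarith) (by linarith [hεm.1.le])
      refine le_trans ?_ (le_max_left _ _)
      linarith
    · push_neg at hcase
      obtain ⟨t₁, ht₁, hΛt₁⟩ := hcase
      have ht₁0 : (0:ℝ) ≤ t₁ := le_trans hs ht₁.1
      have hkey := key_int t₁ (s+1) ht₁0 ht₁.2 (eps a) hεm (fun τ hτ =>
        habs a ha1 (Λ τ) (hΛnn τ (le_trans hs (le_trans ht₁.1 hτ.1)))
          (hbar τ ⟨le_trans ht₁.1 hτ.1, hτ.2.le⟩))
      have hIΛ : 0 ≤ ∫ τ in t₁..(s+1), Λ τ :=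
        intervalIntegral.integral_nonneg ht₁.2 (fun τ hτ => hΛnn τ (le_trans ht₁0 hτ.1))
      have hIφ : (∫ τ in t₁..(s+1), φ τ) ≤ Q := hφsub s t₁ (s+1) hs ht₁.1 ht₁.2 le_rfl
      have h1 : (eps a) ^ (-(2:ℝ)/3) * (∫ τ in t₁..(s+1), φ τ) ≤ (eps a) ^ (-(2:ℝ)/3) * Q :=
        mul_le_mul_of_nonneg_left hIφ (Real.rpow_nonneg hεm.1.le _)
      refine le_trans ?_ (le_max_right _ _)
      nlinarith [mul_le_mul_of_nonneg_left hIΛ hεm.1.le, hεm.1.le]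
  -- conclusion
  refine ⟨4 * ρ, by linarith, ?_⟩
  intro R hR
  set a₀ : ℝ := 2 * R + C + ρ with ha₀_def
  have ha₀ρ : ρ ≤ a₀ := by rw [ha₀_def]; linarith
  have ha₀1 : 1 ≤ a₀ := le_trans hρ1 ha₀ρ
  set δ : ℝ := eps a₀ * ρ / 8 with hδ_def
  have hδ0 : 0 < δ := by
    have := heps_pos a₀ ha₀1
    rw [hδ_def]; positivity
  obtain ⟨N, hN⟩ : ∃ N : ℕ, a₀ - (N : ℝ) * δ ≤ ρ := by
    obtain ⟨N, hN⟩ := exists_nat_ge ((a₀ - ρ) / δ)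
    refine ⟨N, ?_⟩
    rw [div_le_iff₀ hδ0] at hN
    linarith
  refine ⟨(N : ℝ), Nat.cast_nonneg N, ?_⟩
  intro hE0 t ht
  have hΛ0 : Λ 0 ≤ a₀ := by
    have h2 := (hcomp 0 le_rfl).2
    have h3 := hEnn 0 le_rfl
    rw [ha₀_def]; linarith
  have inv : ∀ n : ℕ, Λ (n : ℝ) ≤ max ρ (a₀ - (n : ℝ) * δ) := by
    intro n
    induction n with
    | zero => simpa using le_trans hΛ0 (le_max_right _ _)
    | succ n ih =>
      have hn0 : (0:ℝ) ≤ (n:ℝ) := Nat.cast_nonneg n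
      have hcast : ((n + 1 : ℕ) : ℝ) = (n : ℝ) + 1 := by push_cast; ring
      rw [hcast]
      by_cases hcase : Λ (n:ℝ) ≤ ρ
      · have hstep := step (n:ℝ) ρ hn0 le_rfl hcase
        have hm' := heps_pos ρ hρ1
        have hε1 : eps ρ ≤ 1 := le_trans (heps_le_m ρ) hm1
        have h1 : Λ (n:ℝ) - eps ρ * ρ / 8 ≤ ρ := by nlinarith
        have h2 : 5 * ρ / 8 ≤ ρ := by linarith
        have h3 : Λ ((n:ℝ) + 1) ≤ ρ := le_trans hstep (max_le h1 h2)
        exact le_trans h3 (le_max_left _ _)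
      · push_neg at hcase
        have hρΛ : ρ ≤ Λ (n:ℝ) := hcase.le
        have hΛa₀ : Λ (n:ℝ) ≤ a₀ - (n:ℝ) * δ := by
          rcases le_or_gt (a₀ - (n:ℝ) * δ) ρ with h | h
          · have := max_le le_rfl h
            have hih := le_trans ih (max_le le_rfl h)
            linarith
          · have hih := le_trans ih (max_le h.le le_rfl)
            exact hih
        have hΛna₀ : Λ (n:ℝ) ≤ a₀ := by nlinarith
        have hstep := step (n:ℝ) (Λ (n:ℝ)) hn0 hρΛ le_rfl
        have hea : eps a₀ ≤ eps (Λ (n:ℝ)) := heps_anti _ _ (le_trans hρ1 hρΛ) hΛna₀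
        have hεpos := heps_pos (Λ (n:ℝ)) (le_trans hρ1 hρΛ)
        have hd1 : δ ≤ eps (Λ (n:ℝ)) * Λ (n:ℝ) / 8 := by
          have hmm : eps a₀ * ρ ≤ eps (Λ (n:ℝ)) * Λ (n:ℝ) :=
            mul_le_mul hea hρΛ hρ0.le hεpos.le
          rw [hδ_def]; linarith
        have hε1 : eps a₀ ≤ 1 := le_trans (heps_le_m a₀) hm1
        have hd2 : 5 * Λ (n:ℝ) / 8 ≤ Λ (n:ℝ) - δ := by
          have hδρ : δ ≤ ρ / 8 := by
            rw [hδ_def]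
            nlinarith [heps_pos a₀ ha₀1]
          linarith
        have h3 : Λ ((n:ℝ) + 1) ≤ Λ (n:ℝ) - δ := le_trans hstep (max_le (by linarith) hd2)
        have h4 : Λ ((n:ℝ) + 1) ≤ a₀ - ((n:ℝ) + 1) * δ := by nlinarith
        exact le_trans h4 (le_max_right _ _)
  have hNρ : ∀ n : ℕ, N ≤ n → Λ (n : ℝ) ≤ ρ := by
    intro n hn
    have h1 := inv n
    have h2 : a₀ - (n : ℝ) * δ ≤ ρ := by
      have hc : (N : ℝ) ≤ (n : ℝ) := Nat.cast_le.2 hn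
      nlinarith
    calc Λ (n : ℝ) ≤ max ρ (a₀ - (n : ℝ) * δ) := h1
      _ ≤ ρ := max_le le_rfl h2
  have ht0 : (0 : ℝ) ≤ t := le_trans (Nat.cast_nonneg N) ht
  have hn1 : ((⌊t⌋₊ : ℕ) : ℝ) ≤ t := Nat.floor_le ht0
  have hn2 : t ≤ ((⌊t⌋₊ : ℕ) : ℝ) + 1 := (Nat.lt_floor_add_one t).le
  have hNn : N ≤ ⌊t⌋₊ := Nat.le_floor ht
  have hΛt : Λ t ≤ 2 * ρ :=
    barrier ((⌊t⌋₊ : ℕ) : ℝ) ρ (Nat.cast_nonneg _) le_rfl (hNρ ⌊t⌋₊ hNn) t ⟨hn1, by linarith⟩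
  have h1 := (hcomp t ht0).1
  linarith
end
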